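/- arXiv:0809.4981 — 2 statements merged into one kernel-verified Lean document; each statement's English description precedes it below -/
import Mathlib

section
/- Let a ∈ ℂ with Re a > −1, let q ∈ ℕ and let x ∈ ℝ with 0 ≤ x < 1. Then (1/2π)∫_0^{2π} |1 − x e^{−iθ}|^{2a}·e^{iqθ} dθ = Σ_{n=0}^{∞} (−1)^q · Γ(a+1)² / (Γ(a+1−n)·Γ(a+1−n−q)·n!·(n+q)!) · x^{q+2n}, the series converging absolutely. In particular, the Taylor coefficient of x^r in this function vanishes whenever r and q have different parity or r < q. -/
open MeasureTheory Complex

/-- `|z|^{2w} = exp(w·log(|z|²))` for a complex exponent `w`. -/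
noncomputable def absCPow (z : ℂ) (w : ℂ) : ℂ :=
  Complex.exp (w * (Real.log (‖z‖ ^ 2) : ℂ))

namespace AngularAux

open Metric

noncomputable def FF' (a : ℂ) : ℕ → ℂ
  | 0 => 1
  | n + 1 => FF' a n * (a - n)

lemma FF_nat_eq_zero {k m : ℕ} (h : k < m) : FF' (k : ℂ) m = 0 := by
  induction m with
  | zero => omega
  | succ m ih =>
    rcases Nat.lt_succ_iff_lt_or_eq.mp h with h' | rfl
    · simp [FF', ih h']
    · simp [FF']

lemma Gamma_ratio (a : ℂ) (ha : -1 < a.re) (m : ℕ) :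
    Complex.Gamma (a + 1) / Complex.Gamma (a + 1 - m) = FF' a m := by
  by_cases h : Complex.Gamma (a + 1 - m) = 0
  · rcases (Complex.Gamma_eq_zero_iff _).mp h with ⟨j, hj⟩
    -- a = m - 1 - j, a natural number < m
    have haeq : a = (m : ℂ) - 1 - j := by linear_combination hj
    have hre : a.re = (m : ℝ) - 1 - j := by
      rw [haeq]; simp
    have hjm : j + 1 ≤ m := by
      by_contra hc
      push_neg at hc
      have : (m : ℝ) ≤ (j : ℝ) := by exact_mod_cast Nat.lt_succ_iff.mp hc
      rw [hre] at ha; linarith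
    set k : ℕ := m - 1 - j with hk
    have hkm : k < m := by omega
    have hak : a = (k : ℂ) := by
      have hcast : ((k : ℕ) : ℂ) = (m : ℂ) - 1 - j := by
        rw [hk]
        push_cast [Nat.cast_sub (show j ≤ m - 1 by omega), Nat.cast_sub (show 1 ≤ m by omega)]
        ring
      rw [haeq, ← hcast]
    rw [h, div_zero, hak, FF_nat_eq_zero hkm]
  · -- all intermediate Gammas nonzero
    have hnz : ∀ k ≤ m, Complex.Gamma (a + 1 - k) ≠ 0 := by
      intro k hk hzero
      rcases (Complex.Gamma_eq_zero_iff _).mp hzero with ⟨j, hj⟩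
      apply h
      have : a + 1 - m = -(((j + (m - k) : ℕ)) : ℂ) := by
        push_cast [Nat.cast_sub hk]
        linear_combination hj
      rw [this]
      exact Complex.Gamma_neg_nat_eq_zero _
    have key : ∀ k ≤ m, Complex.Gamma (a + 1) = FF' a k * Complex.Gamma (a + 1 - k) := by
      intro k hk
      induction k with
      | zero => simp [FF']
      | succ k ih =>
        have hk' : k ≤ m := by omega
        have h1 : a - k ≠ 0 := by
          intro h0
          have e : a + 1 - ((k + 1 : ℕ) : ℂ) = 0 := by push_cast; linear_combination h0
          exact hnz (k + 1) (by omega) (by rw [e, Complex.Gamma_zero])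
        have h2 : Complex.Gamma (a - k + 1) = (a - k) * Complex.Gamma (a - k) :=
          Complex.Gamma_add_one _ h1
        rw [ih hk']
        have e1 : a + 1 - (k : ℂ) = (a - k) + 1 := by ring
        have e2 : a + 1 - ((k + 1 : ℕ) : ℂ) = a - k := by push_cast; ring
        rw [e1, h2, e2, FF']
        ring
    rw [key m le_rfl, mul_div_assoc, div_self h, mul_one]


noncomputable def CC (a : ℂ) (m : ℕ) : ℂ := (-1) ^ m * FF' a m / m.factorial

lemma CC_succ (a : ℂ) (m : ℕ) : CC a (m + 1) = CC a m * (-(a - m) / (m + 1)) := by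
  rw [CC, CC, FF', Nat.factorial_succ]
  have h1 : ((m.factorial : ℂ)) ≠ 0 := Nat.cast_ne_zero.mpr m.factorial_ne_zero
  have h2 : ((m : ℂ) + 1) ≠ 0 := by
    have := Nat.cast_ne_zero (R := ℂ).mpr (Nat.succ_ne_zero m)
    push_cast at this
    exact this
  field_simp
  push_cast
  ring

lemma one_sub_mem {z : ℂ} (hz : ‖z‖ < 1) : 0 < (1 - z).re := by
  have h1 : z.re ≤ ‖z‖ := (le_abs_self z.re).trans (Complex.abs_re_le_norm z)
  simp only [Complex.sub_re, Complex.one_re]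
  linarith

lemma hasDerivAt_pow_one_sub (w : ℂ) {z : ℂ} (hz : ‖z‖ < 1) :
    HasDerivAt (fun t : ℂ => (1 - t) ^ w) (-(w * (1 - z) ^ (w - 1))) z := by
  have h0 : (1 - z) ∈ Complex.slitPlane := Or.inl (one_sub_mem hz)
  have h : HasDerivAt (fun t : ℂ => 1 - t) (-1) z := by
    simpa using (hasDerivAt_id z).const_sub 1
  simpa using h.cpow_const h0

lemma iteratedDeriv_pow_one_sub (a : ℂ) (n : ℕ) {z : ℂ} (hz : ‖z‖ < 1) :
    iteratedDeriv n (fun t : ℂ => (1 - t) ^ a) z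
      = (-1) ^ n * FF' a n * (1 - z) ^ (a - n) := by
  induction n generalizing z with
  | zero => simp [FF']
  | succ n ih =>
    rw [iteratedDeriv_succ]
    have hev : (iteratedDeriv n (fun t : ℂ => (1 - t) ^ a))
        =ᶠ[nhds z] fun t => (-1) ^ n * FF' a n * (1 - t) ^ (a - n) := by
      filter_upwards [Metric.ball_mem_nhds z (by linarith [norm_nonneg z] : (0:ℝ) < 1 - ‖z‖)]
        with t ht
      have : ‖t‖ < 1 := by
        have := mem_ball_iff_norm.mp ht
        calc ‖t‖ = ‖z + (t - z)‖ := by ring_nf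
        _ ≤ ‖z‖ + ‖t - z‖ := norm_add_le _ _
        _ < 1 := by rw [norm_sub_rev] at this ⊢; linarith
      exact ih this
    rw [hev.deriv_eq]
    have hd : HasDerivAt (fun t : ℂ => (-1) ^ n * FF' a n * (1 - t) ^ (a - n))
        ((-1) ^ n * FF' a n * (-(( a - n) * (1 - z) ^ (a - n - 1)))) z :=
      (hasDerivAt_pow_one_sub (a - n) hz).const_mul _
    rw [hd.deriv]
    rw [FF']
    have : a - (n : ℂ) - 1 = a - ((n + 1 : ℕ) : ℂ) := by push_cast; ring
    rw [this]
    ring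

lemma binomialHasSum (a : ℂ) {w : ℂ} (hw : ‖w‖ < 1) :
    HasSum (fun m : ℕ => CC a m * w ^ m) ((1 - w) ^ a) := by
  have hdiff : DifferentiableOn ℂ (fun t : ℂ => (1 - t) ^ a) (ball (0:ℂ) 1) := by
    intro z hz
    exact (hasDerivAt_pow_one_sub a (by simpa using mem_ball_zero_iff.mp hz)).differentiableAt.differentiableWithinAt
  have h := Complex.hasSum_taylorSeries_on_ball hdiff (mem_ball_zero_iff.mpr hw)
  simp only [sub_zero] at h
  suffices e : (fun m : ℕ => CC a m * w ^ m) = fun m => ((m.factorial : ℂ))⁻¹ • w ^ m • iteratedDeriv m (fun t : ℂ => (1 - t) ^ a) 0 by rw [e]; exact h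
  funext m
  rw [iteratedDeriv_pow_one_sub a m (by simp)]
  simp [CC, smul_eq_mul]
  ring

lemma summable_norm_CC (a : ℂ) {w : ℂ} (hw : ‖w‖ < 1) :
    Summable (fun m : ℕ => ‖CC a m * w ^ m‖) := by
  by_cases hw0 : w = 0
  · apply summable_of_ne_finset_zero (s := {0})
    intro m hm
    have : m ≠ 0 := by simpa using hm
    simp [hw0, zero_pow this]
  · set r : ℝ := (1 + ‖w‖) / 2 with hr
    have hwr : ‖w‖ < r := by rw [hr]; linarith
    have hr1 : r < 1 := by rw [hr]; linarith
    have hw0' : 0 < ‖w‖ := norm_pos_iff.mpr hw0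
    have hr0 : 0 < r := lt_trans hw0' hwr
    apply summable_of_ratio_norm_eventually_le hr1
    obtain ⟨N, hN⟩ := exists_nat_ge ((‖a‖ * ‖w‖) / (r - ‖w‖))
    filter_upwards [Filter.eventually_ge_atTop N] with m hm
    have hm' : (‖a‖ * ‖w‖) / (r - ‖w‖) ≤ (m : ℝ) := hN.trans (by exact_mod_cast hm)
    have hineq : (‖a‖ + m) * ‖w‖ ≤ r * (m + 1) := by
      have h3 : ‖a‖ * ‖w‖ ≤ (r - ‖w‖) * m := by
        rw [div_le_iff₀ (by linarith)] at hm'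
        linarith [hm']
      nlinarith
    have hnorm : ‖CC a (m + 1)‖ ≤ ‖CC a m‖ * ((‖a‖ + m) / (m + 1)) := by
      rw [CC_succ, norm_mul]
      gcongr
      rw [norm_div, norm_neg]
      gcongr
      · calc ‖a - (m : ℂ)‖ ≤ ‖a‖ + ‖(m : ℂ)‖ := norm_sub_le _ _
          _ = ‖a‖ + m := by simp
      · rw [show ((m : ℂ) + 1) = ((m + 1 : ℕ) : ℂ) by push_cast; ring]
        rw [Complex.norm_natCast]
        push_cast
        exact le_refl _
    simp only [norm_norm, norm_mul, norm_pow]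
    calc ‖CC a (m + 1)‖ * ‖w‖ ^ (m + 1)
        ≤ (‖CC a m‖ * ((‖a‖ + m) / (m + 1))) * ‖w‖ ^ (m + 1) := by
          gcongr
      _ = (‖CC a m‖ * ‖w‖ ^ m) * (((‖a‖ + m) * ‖w‖) / (m + 1)) := by
          rw [pow_succ]; ring
      _ ≤ (‖CC a m‖ * ‖w‖ ^ m) * r := by
          have : ((‖a‖ + m) * ‖w‖) / (m + 1) ≤ r := by
            rw [div_le_iff₀ (by positivity : (0:ℝ) < (m:ℝ) + 1)]
            linarith
          exact mul_le_mul_of_nonneg_left this (by positivity)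
      _ = r * (‖CC a m‖ * ‖w‖ ^ m) := by ring

lemma absCPow_factor {z : ℂ} (hz : 0 < z.re) (a : ℂ) :
    absCPow z a = z ^ a * (starRingEnd ℂ) z ^ a := by
  have hz0 : z ≠ 0 := by
    intro h; rw [h] at hz; simp at hz
  have hzc0 : (starRingEnd ℂ) z ≠ 0 := by simpa using hz0
  have harg : z.arg ≠ Real.pi := by
    intro h
    have := Complex.arg_eq_pi_iff.mp h
    linarith [this.1]
  rw [Complex.cpow_def_of_ne_zero hz0, Complex.cpow_def_of_ne_zero hzc0,
    Complex.log_conj z harg, ← Complex.exp_add]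
  rw [absCPow]
  congr 1
  have h1 : Complex.log z * a + (starRingEnd ℂ) (Complex.log z) * a
      = (Complex.log z + (starRingEnd ℂ) (Complex.log z)) * a := by ring
  rw [h1, Complex.add_conj, Complex.log_re]
  rw [show (‖z‖ ^ 2 : ℝ) = ‖z‖ ^ (2:ℕ) from by norm_num,
    Real.log_pow]
  push_cast
  ring

lemma integral_exp_int (k : ℤ) :
    (∫ θ in (0:ℝ)..(2*Real.pi), Complex.exp ((k:ℂ) * (θ:ℂ) * I))
      = if k = 0 then ((2*Real.pi : ℝ) : ℂ) else 0 := by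
  by_cases hk : k = 0
  · simp [hk]
  · rw [if_neg hk]
    have hc : ((k:ℂ) * I) ≠ 0 := by
      simp [Complex.ext_iff, Int.cast_injective.ne_iff]
      exact_mod_cast hk
    have : ∀ θ : ℝ, (k:ℂ) * (θ:ℂ) * I = ((k:ℂ) * I) * (θ:ℂ) := fun θ => by ring
    simp only [this]
    rw [integral_exp_mul_complex hc]
    have h2 : (k:ℂ) * I * ((2*Real.pi : ℝ):ℂ) = (k:ℂ) * (2 * (Real.pi:ℂ) * I) := by
      push_cast; ring
    rw [h2, Complex.exp_int_mul_two_pi_mul_I]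
    simp

lemma integral_term (a : ℂ) (q m n : ℕ) (y : ℝ) :
    (∫ θ in (0:ℝ)..(2*Real.pi),
        (CC a m * ((y:ℂ) * Complex.exp (-(θ:ℂ) * I)) ^ m) *
          (CC a n * ((y:ℂ) * Complex.exp ((θ:ℂ) * I)) ^ n) *
          Complex.exp ((q:ℂ) * (θ:ℂ) * I))
      = if m = n + q then CC a m * CC a n * (y:ℂ) ^ (m + n) * ((2*Real.pi : ℝ) : ℂ)
        else 0 := by
  set k : ℤ := (q : ℤ) + n - m with hk
  have key : ∀ θ : ℝ,
      (CC a m * ((y:ℂ) * Complex.exp (-(θ:ℂ) * I)) ^ m) *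
          (CC a n * ((y:ℂ) * Complex.exp ((θ:ℂ) * I)) ^ n) *
          Complex.exp ((q:ℂ) * (θ:ℂ) * I)
        = (CC a m * CC a n * (y:ℂ) ^ (m + n)) * Complex.exp ((k:ℂ) * (θ:ℂ) * I) := by
    intro θ
    rw [mul_pow, mul_pow, ← Complex.exp_nat_mul, ← Complex.exp_nat_mul, pow_add]
    rw [show ((k:ℂ) * (θ:ℂ) * I)
        = ((m:ℂ) * (-(θ:ℂ) * I)) + (((n:ℂ) * ((θ:ℂ) * I)) + ((q:ℂ) * (θ:ℂ) * I)) from by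
      rw [hk]; push_cast; ring]
    rw [Complex.exp_add, Complex.exp_add]
    ring
  simp only [key]
  rw [intervalIntegral.integral_const_mul, integral_exp_int k]
  have hiff : k = 0 ↔ m = n + q := by omega
  by_cases h : m = n + q
  · rw [if_pos (hiff.mpr h), if_pos h]
  · rw [if_neg (fun h0 => h (hiff.mp h0)), if_neg h, mul_zero]

/-- The series coefficient. -/
noncomputable def T (a : ℂ) (q : ℕ) (n : ℕ) : ℂ :=
  (-1 : ℂ) ^ q * Complex.Gamma (a + 1) ^ 2 /
    (Complex.Gamma (a + 1 - n) * Complex.Gamma (a + 1 - n - q) *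
      (n.factorial : ℂ) * ((n + q).factorial : ℂ))

lemma T_eq (a : ℂ) (ha : -1 < a.re) (q n : ℕ) :
    T a q n = CC a (n + q) * CC a n := by
  have hsign : (-1 : ℂ) ^ (n + q) * (-1 : ℂ) ^ n = (-1 : ℂ) ^ q := by
    rw [pow_add, mul_comm ((-1:ℂ)^n) ((-1:ℂ)^q), mul_assoc, ← pow_add,
      show n + n = 2 * n from by ring, pow_mul, neg_one_sq, one_pow, mul_one]
  have hcast : a + 1 - ((n + q : ℕ) : ℂ) = a + 1 - n - q := by push_cast; ring
  rw [T, CC, CC, div_mul_div_comm]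
  rw [show ((-1:ℂ) ^ (n + q) * FF' a (n + q)) * ((-1:ℂ) ^ n * FF' a n)
      = ((-1:ℂ) ^ (n+q) * (-1:ℂ)^n) * (FF' a (n + q) * FF' a n) from by ring, hsign]
  rw [← Gamma_ratio a ha (n + q), ← Gamma_ratio a ha n, hcast]
  simp only [div_eq_mul_inv, mul_inv]
  ring

lemma norm_exp_I (θ : ℝ) : ‖Complex.exp ((θ:ℂ) * I)‖ = 1 := by
  simp [Complex.norm_exp]

lemma norm_exp_neg_I (θ : ℝ) : ‖Complex.exp (-(θ:ℂ) * I)‖ = 1 := by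
  simp [Complex.norm_exp]

lemma main_summable (a : ℂ) (ha : -1 < a.re) (q : ℕ) (y : ℝ)
    (hy0 : 0 ≤ y) (hy1 : y < 1) :
    Summable fun n : ℕ => ‖T a q n * (y:ℂ) ^ (q + 2 * n)‖ := by
  have hy : ‖(y:ℂ)‖ < 1 := by
    rwa [Complex.norm_real, Real.norm_eq_abs, _root_.abs_of_nonneg hy0]
  have h1 := summable_norm_CC a hy
  have hprod : Summable (fun p : ℕ × ℕ => ‖CC a p.1 * (y:ℂ) ^ p.1‖ * ‖CC a p.2 * (y:ℂ) ^ p.2‖) :=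
    Summable.mul_of_nonneg (f := fun m : ℕ => ‖CC a m * (y:ℂ) ^ m‖)
      (g := fun m : ℕ => ‖CC a m * (y:ℂ) ^ m‖)
      h1 h1 (fun _ => norm_nonneg _) (fun _ => norm_nonneg _)
  have hinj : Function.Injective (fun n : ℕ => ((n + q, n) : ℕ × ℕ)) := by
    intro i j h
    simpa using (Prod.ext_iff.mp h).2
  have := hprod.comp_injective hinj
  apply this.congr
  intro n
  simp only [Function.comp_apply]
  rw [T_eq a ha q n, ← norm_mul]
  congr 1
  ring

lemma main_formula (a : ℂ) (ha : -1 < a.re) (q : ℕ) (y : ℝ)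
    (hy0 : 0 ≤ y) (hy1 : y < 1) :
    (1 / (2 * Real.pi) : ℂ) *
        (∫ θ in (0 : ℝ)..(2 * Real.pi),
          absCPow (1 - (y : ℂ) * Complex.exp (-(θ : ℂ) * I)) a *
            Complex.exp ((q : ℂ) * (θ : ℂ) * I)) =
      ∑' n : ℕ, T a q n * (y:ℂ) ^ (q + 2 * n) := by
  have hy : ‖(y:ℂ)‖ < 1 := by rwa [Complex.norm_real, Real.norm_eq_abs, _root_.abs_of_nonneg hy0]
  have hnu : ∀ θ : ℝ, ‖(y:ℂ) * Complex.exp (-(θ:ℂ) * I)‖ < 1 := by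
    intro θ
    rw [norm_mul, norm_exp_neg_I, mul_one]; exact hy
  have hnv : ∀ θ : ℝ, ‖(y:ℂ) * Complex.exp ((θ:ℂ) * I)‖ < 1 := by
    intro θ
    rw [norm_mul, norm_exp_I, mul_one]; exact hy
  -- pointwise HasSum of the double series to the integrand
  have hptwise : ∀ θ : ℝ,
      HasSum (fun p : ℕ × ℕ =>
        (CC a p.1 * ((y:ℂ) * Complex.exp (-(θ:ℂ) * I)) ^ p.1) *
          (CC a p.2 * ((y:ℂ) * Complex.exp ((θ:ℂ) * I)) ^ p.2) *
          Complex.exp ((q:ℂ) * (θ:ℂ) * I))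
        (absCPow (1 - (y : ℂ) * Complex.exp (-(θ : ℂ) * I)) a *
          Complex.exp ((q : ℂ) * (θ : ℂ) * I)) := by
    intro θ
    set u : ℂ := (y:ℂ) * Complex.exp (-(θ:ℂ) * I) with hu
    set v : ℂ := (y:ℂ) * Complex.exp ((θ:ℂ) * I) with hv
    have h1 := binomialHasSum a (hnu θ)
    have h2 := binomialHasSum a (hnv θ)
    have hm : Summable (fun p : ℕ × ℕ => (CC a p.1 * u ^ p.1) * (CC a p.2 * v ^ p.2)) :=
      summable_mul_of_summable_norm
        (f := fun m : ℕ => CC a m * u ^ m) (g := fun m : ℕ => CC a m * v ^ m)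
        (summable_norm_CC a (hnu θ)) (summable_norm_CC a (hnv θ))
    have hprod := (h1.mul h2 hm).mul_right (Complex.exp ((q:ℂ) * (θ:ℂ) * I))
    have hfac : absCPow (1 - u) a = (1 - u) ^ a * (1 - v) ^ a := by
      have hre : 0 < (1 - u).re := one_sub_mem (hnu θ)
      rw [absCPow_factor hre a]
      congr 2
      rw [hu, hv]
      simp [map_mul, Complex.conj_ofReal, ← Complex.exp_conj]
    rw [hfac]
    exact hprod
  have hcont : ∀ p : ℕ × ℕ, Continuous (fun θ : ℝ =>
      (CC a p.1 * ((y:ℂ) * Complex.exp (-(θ:ℂ) * I)) ^ p.1) *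
        (CC a p.2 * ((y:ℂ) * Complex.exp ((θ:ℂ) * I)) ^ p.2) *
        Complex.exp ((q:ℂ) * (θ:ℂ) * I)) := by
    intro p
    fun_prop
  have hbound_sum : Summable (fun p : ℕ × ℕ =>
      ‖CC a p.1 * (y:ℂ) ^ p.1‖ * ‖CC a p.2 * (y:ℂ) ^ p.2‖) :=
    Summable.mul_of_nonneg (f := fun m : ℕ => ‖CC a m * (y:ℂ) ^ m‖)
      (g := fun m : ℕ => ‖CC a m * (y:ℂ) ^ m‖)
      (summable_norm_CC a hy) (summable_norm_CC a hy)
      (fun _ => norm_nonneg _) (fun _ => norm_nonneg _)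
  have hsumint : HasSum (fun p : ℕ × ℕ =>
      ∫ θ in (0:ℝ)..(2*Real.pi),
        (CC a p.1 * ((y:ℂ) * Complex.exp (-(θ:ℂ) * I)) ^ p.1) *
          (CC a p.2 * ((y:ℂ) * Complex.exp ((θ:ℂ) * I)) ^ p.2) *
          Complex.exp ((q:ℂ) * (θ:ℂ) * I))
      (∫ θ in (0:ℝ)..(2*Real.pi),
        absCPow (1 - (y : ℂ) * Complex.exp (-(θ : ℂ) * I)) a *
          Complex.exp ((q : ℂ) * (θ : ℂ) * I)) := by
    apply intervalIntegral.hasSum_integral_of_dominated_convergence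
      (bound := fun p _ => ‖CC a p.1 * (y:ℂ) ^ p.1‖ * ‖CC a p.2 * (y:ℂ) ^ p.2‖)
    · exact fun p => ((hcont p).aestronglyMeasurable).restrict
    · intro p
      filter_upwards with θ _
      have hq : ‖Complex.exp ((q:ℂ) * (θ:ℂ) * I)‖ = 1 := by
        rw [show (q:ℂ) * (θ:ℂ) * I = ((q * θ : ℝ):ℂ) * I from by push_cast; ring, norm_exp_I]
      simp only [norm_mul, norm_pow, norm_exp_neg_I, norm_exp_I, hq, mul_one]
      exact le_refl _
    · filter_upwards with θ _
      exact hbound_sum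
    · exact intervalIntegrable_const
    · filter_upwards with θ _
      exact hptwise θ
  -- compute the individual integrals
  have hsum2 : HasSum (fun p : ℕ × ℕ =>
      if p.1 = p.2 + q then CC a p.1 * CC a p.2 * (y:ℂ) ^ (p.1 + p.2) * ((2*Real.pi : ℝ) : ℂ)
      else 0)
      (∫ θ in (0:ℝ)..(2*Real.pi),
        absCPow (1 - (y : ℂ) * Complex.exp (-(θ : ℂ) * I)) a *
          Complex.exp ((q : ℂ) * (θ : ℂ) * I)) := by
    have heq : (fun p : ℕ × ℕ =>
        ∫ θ in (0:ℝ)..(2*Real.pi),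
          (CC a p.1 * ((y:ℂ) * Complex.exp (-(θ:ℂ) * I)) ^ p.1) *
            (CC a p.2 * ((y:ℂ) * Complex.exp ((θ:ℂ) * I)) ^ p.2) *
            Complex.exp ((q:ℂ) * (θ:ℂ) * I))
        = fun p : ℕ × ℕ =>
          if p.1 = p.2 + q then CC a p.1 * CC a p.2 * (y:ℂ) ^ (p.1 + p.2) * ((2*Real.pi : ℝ) : ℂ)
          else 0 :=
      funext fun p => integral_term a q p.1 p.2 y
    rw [heq] at hsumint
    exact hsumint
  have hinj : Function.Injective (fun n : ℕ => ((n + q, n) : ℕ × ℕ)) := by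
    intro i j h
    simpa using (Prod.ext_iff.mp h).2
  have hoff : ∀ p : ℕ × ℕ, p ∉ Set.range (fun n : ℕ => ((n + q, n) : ℕ × ℕ)) →
      (if p.1 = p.2 + q then CC a p.1 * CC a p.2 * (y:ℂ) ^ (p.1 + p.2) * ((2*Real.pi : ℝ) : ℂ)
        else 0) = 0 := by
    intro p hp
    rw [if_neg]
    intro h
    exact hp ⟨p.2, Prod.ext (by simp [h]) rfl⟩
  have hdiag := (hinj.hasSum_iff hoff).mpr hsum2
  simp only [Function.comp_def, eq_self_iff_true, if_true] at hdiag
  have hfinal := hdiag.mul_left ((1 / (2 * Real.pi) : ℂ))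
  rw [hfinal.tsum_eq.symm]
  apply tsum_congr
  intro n
  have hπ : ((2:ℂ) * (Real.pi:ℂ)) ≠ 0 := by
    simp [Real.pi_ne_zero]
  rw [show ((2*Real.pi : ℝ) : ℂ) = (2:ℂ) * (Real.pi:ℂ) from by push_cast; ring]
  rw [T_eq a ha q n, show n + q + n = q + 2 * n from by omega]
  rw [mul_comm ((1 : ℂ) / (2 * Real.pi))]
  rw [mul_assoc, mul_one_div, div_self hπ, mul_one]

lemma zero_coeffs (d : ℕ → ℂ)
    (hsum : ∀ y : ℝ, 0 ≤ y → y < 1 → Summable (fun r : ℕ => ‖d r * (y:ℂ) ^ r‖))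
    (hzero : ∀ y : ℝ, 0 ≤ y → y < 1 → ∑' r : ℕ, d r * (y:ℂ) ^ r = 0) :
    ∀ r, d r = 0 := by
  intro k
  induction k using Nat.strong_induction_on with
  | _ k ih =>
  have hhalfn : Summable (fun r : ℕ => ‖d r‖ * (1/2 : ℝ) ^ r) := by
    apply (hsum (1/2) (by norm_num) (by norm_num)).congr
    intro r
    rw [norm_mul, norm_pow, Complex.norm_real, Real.norm_eq_abs,
      _root_.abs_of_nonneg (by norm_num : (0:ℝ) ≤ 1/2)]
  have hCsum : Summable (fun j : ℕ => ‖d (k + 1 + j)‖ * (1/2 : ℝ) ^ j) := by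
    have h1 : Summable (fun j : ℕ => ‖d (j + (k+1))‖ * (1/2 : ℝ) ^ (j + (k+1))) :=
      (summable_nat_add_iff (f := fun r : ℕ => ‖d r‖ * (1/2 : ℝ) ^ r) (k+1)).mpr hhalfn
    apply (h1.mul_right ((2:ℝ) ^ (k+1))).congr
    intro j
    rw [pow_add]
    have h2 : ((1:ℝ)/2) ^ (k+1) * (2:ℝ) ^ (k+1) = 1 := by
      rw [← mul_pow]; norm_num
    rw [show k + 1 + j = j + (k + 1) from by omega]
    calc ‖d (j + (k+1))‖ * ((1/2:ℝ) ^ j * (1/2:ℝ) ^ (k+1)) * (2:ℝ) ^ (k+1)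
        = ‖d (j + (k+1))‖ * (1/2:ℝ) ^ j * ((1/2:ℝ) ^ (k+1) * (2:ℝ) ^ (k+1)) := by ring
      _ = ‖d (j + (k+1))‖ * (1/2:ℝ) ^ j := by rw [h2, mul_one]
  set Cst : ℝ := ∑' j : ℕ, ‖d (k + 1 + j)‖ * (1/2 : ℝ) ^ j with hC
  have hCnonneg : 0 ≤ Cst := tsum_nonneg (fun j => by positivity)
  have hest : ∀ y : ℝ, 0 < y → y ≤ 1/2 → ‖d k‖ ≤ y * Cst := by
    intro y hy0 hy2
    have hy1 : y < 1 := by linarith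
    have hyne : (y:ℂ) ≠ 0 := by
      simp only [ne_eq, Complex.ofReal_eq_zero]
      linarith
    have hs := hsum y hy0.le hy1
    have hz := hzero y hy0.le hy1
    have hs' : Summable (fun r : ℕ => d r * (y:ℂ) ^ r) := hs.of_norm
    -- first k terms vanish
    have hsplit := Summable.sum_add_tsum_nat_add (f := fun r : ℕ => d r * (y:ℂ) ^ r) k hs'
    have hfin : (∑ i ∈ Finset.range k, d i * (y:ℂ) ^ i) = 0 :=
      Finset.sum_eq_zero (fun i hi => by rw [ih i (Finset.mem_range.mp hi), zero_mul])
    have htail : ∑' i : ℕ, d (i + k) * (y:ℂ) ^ (i + k) = 0 := by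
      rw [← hsplit, hfin, zero_add] at hz
      exact hz
    have hfac : ∀ i : ℕ, d (i + k) * (y:ℂ) ^ (i + k) = (y:ℂ) ^ k * (d (i + k) * (y:ℂ) ^ i) := by
      intro i
      rw [pow_add]; ring
    have htail2 : ∑' i : ℕ, d (i + k) * (y:ℂ) ^ i = 0 := by
      have := htail
      rw [tsum_congr hfac, tsum_mul_left] at this
      rcases mul_eq_zero.mp this with h | h
      · exact absurd h (pow_ne_zero k hyne)
      · exact h
    have hs'' : Summable (fun i : ℕ => d (i + k) * (y:ℂ) ^ i) := by
      have h1 : Summable (fun i : ℕ => d (i + k) * (y:ℂ) ^ (i + k)) :=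
        (summable_nat_add_iff (f := fun r : ℕ => d r * (y:ℂ) ^ r) k).mpr hs'
      have h2 := h1.mul_left (((y:ℂ) ^ k)⁻¹)
      apply h2.congr
      intro i
      rw [pow_add]
      field_simp
    have hzeroadd := Summable.tsum_eq_zero_add hs''
    rw [htail2] at hzeroadd
    simp only [Nat.zero_add, pow_zero, mul_one] at hzeroadd
    have hdk : d k = -∑' i : ℕ, d (i + 1 + k) * (y:ℂ) ^ (i + 1) :=
      eq_neg_of_add_eq_zero_left hzeroadd.symm
    have hsn : Summable (fun i : ℕ => ‖d (i + 1 + k) * (y:ℂ) ^ (i + 1)‖) := by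
      have h1 : Summable (fun i : ℕ => d (i + 1 + k) * (y:ℂ) ^ (i + 1)) :=
        (summable_nat_add_iff (f := fun i : ℕ => d (i + k) * (y:ℂ) ^ i) 1).mpr hs''
      exact h1.norm
    have hRsum : Summable (fun i : ℕ => (‖d (k + 1 + i)‖ * (1/2 : ℝ) ^ i) * y) :=
      hCsum.mul_right y
    have hterm : ∀ i : ℕ, ‖d (i + 1 + k) * (y:ℂ) ^ (i + 1)‖
        ≤ (‖d (k + 1 + i)‖ * (1/2 : ℝ) ^ i) * y := by
      intro i
      rw [norm_mul, norm_pow, Complex.norm_real, Real.norm_eq_abs,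
        _root_.abs_of_nonneg hy0.le, show i + 1 + k = k + 1 + i from by omega]
      have hpow : y ^ (i + 1) ≤ (1/2 : ℝ) ^ i * y := by
        rw [pow_succ]
        have : y ^ i ≤ (1/2 : ℝ) ^ i := pow_le_pow_left₀ hy0.le hy2 i
        nlinarith [pow_nonneg hy0.le i]
      calc ‖d (k + 1 + i)‖ * y ^ (i + 1)
          ≤ ‖d (k + 1 + i)‖ * ((1/2 : ℝ) ^ i * y) := by
            exact mul_le_mul_of_nonneg_left hpow (norm_nonneg _)
        _ = (‖d (k + 1 + i)‖ * (1/2 : ℝ) ^ i) * y := by ring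
    calc ‖d k‖ = ‖∑' i : ℕ, d (i + 1 + k) * (y:ℂ) ^ (i + 1)‖ := by rw [hdk, norm_neg]
      _ ≤ ∑' i : ℕ, ‖d (i + 1 + k) * (y:ℂ) ^ (i + 1)‖ := norm_tsum_le_tsum_norm hsn
      _ ≤ ∑' i : ℕ, (‖d (k + 1 + i)‖ * (1/2 : ℝ) ^ i) * y := Summable.tsum_le_tsum hterm hsn hRsum
      _ = Cst * y := by rw [hC, tsum_mul_right]
      _ = y * Cst := by ring
  have h0 : ‖d k‖ ≤ 0 := by
    apply le_of_forall_pos_le_add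
    intro ε hε
    set y : ℝ := min (1/2) (ε / (Cst + 1)) with hy
    have hy0 : 0 < y := lt_min (by norm_num) (div_pos hε (by linarith))
    have h1 := hest y hy0 (min_le_left _ _)
    have h2 : y * Cst ≤ ε := by
      have h3 : y ≤ ε / (Cst + 1) := min_le_right _ _
      have h4 : y * Cst ≤ (ε / (Cst + 1)) * (Cst + 1) := by
        apply mul_le_mul h3 (by linarith) hCnonneg
        positivity
      rwa [div_mul_cancel₀ ε (by linarith : Cst + 1 ≠ 0)] at h4
    linarith
  simpa using norm_le_zero_iff.mp h0

end AngularAux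

open AngularAux in
/-- The Fourier coefficient function `x ↦ (1/2π)∫_0^{2π} |1 − x e^{−iθ}|^{2a} e^{iqθ} dθ`
is given on `[0,1)` by the absolutely convergent power series
`Σ_n (−1)^q Γ(a+1)²/(Γ(a+1−n)Γ(a+1−n−q) n! (n+q)!) x^{q+2n}`; in particular any
power-series representation of it has vanishing coefficient of `x^r` whenever `r` and `q`
have different parity or `r < q`. -/
theorem angular_integral_series (a : ℂ) (ha : -1 < a.re) (q : ℕ) (x : ℝ)
    (hx0 : 0 ≤ x) (hx1 : x < 1) :
    (Summable fun n : ℕ =>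
      ‖(-1 : ℂ) ^ q * Complex.Gamma (a + 1) ^ 2 /
          (Complex.Gamma (a + 1 - n) * Complex.Gamma (a + 1 - n - q) *
            (n.factorial : ℂ) * ((n + q).factorial : ℂ)) * (x : ℂ) ^ (q + 2 * n)‖) ∧
    ((1 / (2 * Real.pi) : ℂ) *
        (∫ θ in (0 : ℝ)..(2 * Real.pi),
          absCPow (1 - (x : ℂ) * Complex.exp (-(θ : ℂ) * Complex.I)) a *
            Complex.exp ((q : ℂ) * (θ : ℂ) * Complex.I)) =
      (∑' n : ℕ, (-1 : ℂ) ^ q * Complex.Gamma (a + 1) ^ 2 /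
          (Complex.Gamma (a + 1 - n) * Complex.Gamma (a + 1 - n - q) *
            (n.factorial : ℂ) * ((n + q).factorial : ℂ)) * (x : ℂ) ^ (q + 2 * n))) ∧
    (∀ c : ℕ → ℂ,
      (∀ y : ℝ, 0 ≤ y → y < 1 →
        (Summable fun r : ℕ => ‖c r * (y : ℂ) ^ r‖) ∧
        (1 / (2 * Real.pi) : ℂ) *
            (∫ θ in (0 : ℝ)..(2 * Real.pi),
              absCPow (1 - (y : ℂ) * Complex.exp (-(θ : ℂ) * Complex.I)) a *
                Complex.exp ((q : ℂ) * (θ : ℂ) * Complex.I)) =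
          (∑' r : ℕ, c r * (y : ℂ) ^ r)) →
      ∀ r : ℕ, (r % 2 ≠ q % 2 ∨ r < q) → c r = 0) := by
  refine ⟨main_summable a ha q x hx0 hx1, main_formula a ha q x hx0 hx1, ?_⟩
  intro c hc r hr
  -- the coefficient function of the series, spread over all of ℕ
  set e : ℕ → ℂ := fun r => if q ≤ r ∧ (r - q) % 2 = 0 then T a q ((r - q) / 2) else 0 with he
  have hinj : Function.Injective (fun n : ℕ => q + 2 * n) := by
    intro i j h
    simp only at h
    omega
  have hoff : ∀ r : ℕ, r ∉ Set.range (fun n : ℕ => q + 2 * n) → e r = 0 := by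
    intro r hrr
    rw [he]
    simp only
    rw [if_neg]
    rintro ⟨h1, h2⟩
    exact hrr ⟨(r - q) / 2, show q + 2 * ((r - q) / 2) = r by omega⟩
  have hcomp : ∀ n : ℕ, e (q + 2 * n) = T a q n := by
    intro n
    rw [he]
    simp only
    rw [if_pos ⟨by omega, by omega⟩]
    congr 1
    omega
  -- the two power series agree on [0,1)
  have heq : ∀ y : ℝ, 0 ≤ y → y < 1 →
      (Summable fun r : ℕ => ‖e r * (y : ℂ) ^ r‖) ∧
      ∑' r : ℕ, e r * (y : ℂ) ^ r = ∑' n : ℕ, T a q n * (y : ℂ) ^ (q + 2 * n) := by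
    intro y hy0 hy1
    have hoffn : ∀ r : ℕ, r ∉ Set.range (fun n : ℕ => q + 2 * n) →
        ‖e r * (y : ℂ) ^ r‖ = 0 := by
      intro r hrr
      rw [hoff r hrr, zero_mul, norm_zero]
    have hcompn : ((fun r : ℕ => ‖e r * (y : ℂ) ^ r‖) ∘ (fun n : ℕ => q + 2 * n))
        = fun n : ℕ => ‖T a q n * (y : ℂ) ^ (q + 2 * n)‖ := by
      funext n
      simp only [Function.comp_apply, hcomp n]
    have hsn : Summable fun r : ℕ => ‖e r * (y : ℂ) ^ r‖ := by
      apply (hinj.summable_iff hoffn).mp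
      rw [hcompn]
      exact main_summable a ha q y hy0 hy1
    refine ⟨hsn, ?_⟩
    have hoffe : ∀ r : ℕ, r ∉ Set.range (fun n : ℕ => q + 2 * n) →
        e r * (y : ℂ) ^ r = 0 := by
      intro r hrr
      rw [hoff r hrr, zero_mul]
    have hhs := (hinj.hasSum_iff hoffe).mpr hsn.of_norm.hasSum
    have : ∑' n : ℕ, e (q + 2 * n) * (y:ℂ) ^ (q + 2 * n) = ∑' r : ℕ, e r * (y : ℂ) ^ r :=
      hhs.tsum_eq
    rw [← this]
    apply tsum_congr
    intro n
    rw [hcomp n]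
  -- the difference has all coefficients zero
  have hdd := zero_coeffs (fun r => c r - e r) ?_ ?_
  · have h1 := hdd r
    have h2 : e r = 0 := by
      rw [he]
      simp only
      rw [if_neg]
      rintro ⟨h3, h4⟩
      rcases hr with h5 | h5
      · omega
      · omega
    have : c r - e r = 0 := h1
    rw [h2, sub_zero] at this
    exact this
  · intro y hy0 hy1
    apply Summable.of_nonneg_of_le (fun r => norm_nonneg _)
      (fun r => ?_) (((hc y hy0 hy1).1.add (heq y hy0 hy1).1))
    rw [sub_mul]
    exact norm_sub_le _ _
  · intro y hy0 hy1
    have h1 : ∑' r : ℕ, (c r - e r) * (y : ℂ) ^ r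
        = (∑' r : ℕ, c r * (y : ℂ) ^ r) - ∑' r : ℕ, e r * (y : ℂ) ^ r := by
      rw [← Summable.tsum_sub (hc y hy0 hy1).1.of_norm (heq y hy0 hy1).1.of_norm]
      apply tsum_congr
      intro n
      rw [sub_mul]
    rw [h1, ← (hc y hy0 hy1).2, (heq y hy0 hy1).2, ← main_formula a ha q y hy0 hy1, sub_self]
end

section
/- Let p ∈ ℕ and let x, y ∈ ℂ be such that none of x, y, and x+y+j for 0 ≤ j ≤ p is a nonpositive integer. Then Σ_{j=0}^{p} (−1)^j·C(p,j)·Γ(x+j)/Γ(x+y+j) = Γ(x)·Γ(y+p) / (Γ(x+y+p)·Γ(y)), where C(p,j) is the binomial coefficient. -/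
open Complex Finset

private lemma gsum_pascal (p : ℕ) (x y : ℂ) :
    ∑ j ∈ range (p + 1 + 1),
        (-1 : ℂ) ^ j * ((p + 1).choose j : ℂ) * Gamma (x + j) / Gamma (x + y + j)
      = (∑ j ∈ range (p + 1),
            (-1 : ℂ) ^ j * (p.choose j : ℂ) * Gamma (x + j) / Gamma (x + y + j))
        - ∑ j ∈ range (p + 1),
            (-1 : ℂ) ^ j * (p.choose j : ℂ) * Gamma (x + 1 + j) / Gamma (x + 1 + y + j) := by
  rw [Finset.sum_range_succ' _ (p + 1),
    Finset.sum_range_succ'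
      (fun j : ℕ => (-1 : ℂ) ^ j * (p.choose j : ℂ) * Gamma (x + j) / Gamma (x + y + j)) p]
  have key : ∀ j : ℕ,
      (-1 : ℂ) ^ (j + 1) * ((p + 1).choose (j + 1) : ℂ) * Gamma (x + (j + 1 : ℕ)) /
          Gamma (x + y + (j + 1 : ℕ))
        = (-1 : ℂ) ^ (j + 1) * (p.choose (j + 1) : ℂ) * Gamma (x + (j + 1 : ℕ)) /
              Gamma (x + y + (j + 1 : ℕ))
          - (-1 : ℂ) ^ j * (p.choose j : ℂ) * Gamma (x + 1 + j) / Gamma (x + 1 + y + j) := by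
    intro j
    have h1 : x + ((j : ℂ) + 1) = x + 1 + j := by ring
    have h2 : x + y + ((j : ℂ) + 1) = x + 1 + y + j := by ring
    rw [Nat.choose_succ_succ]
    push_cast
    rw [h1, h2]
    ring
  have e1 : ∑ j ∈ range (p + 1),
        (-1 : ℂ) ^ (j + 1) * ((p + 1).choose (j + 1) : ℂ) * Gamma (x + (j + 1 : ℕ)) /
          Gamma (x + y + (j + 1 : ℕ))
      = (∑ j ∈ range (p + 1),
            (-1 : ℂ) ^ (j + 1) * (p.choose (j + 1) : ℂ) * Gamma (x + (j + 1 : ℕ)) /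
              Gamma (x + y + (j + 1 : ℕ)))
        - ∑ j ∈ range (p + 1),
            (-1 : ℂ) ^ j * (p.choose j : ℂ) * Gamma (x + 1 + j) / Gamma (x + 1 + y + j) := by
    rw [← Finset.sum_sub_distrib]
    exact Finset.sum_congr rfl fun j _ => key j
  have e2 : ∑ j ∈ range (p + 1),
        (-1 : ℂ) ^ (j + 1) * (p.choose (j + 1) : ℂ) * Gamma (x + (j + 1 : ℕ)) /
          Gamma (x + y + (j + 1 : ℕ))
      = ∑ j ∈ range p,
        (-1 : ℂ) ^ (j + 1) * (p.choose (j + 1) : ℂ) * Gamma (x + (j + 1 : ℕ)) /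
          Gamma (x + y + (j + 1 : ℕ)) := by
    rw [Finset.sum_range_succ, Nat.choose_succ_self]
    simp
  rw [e1, e2]
  simp
  ring

private lemma gsum_main : ∀ (p : ℕ) (x y : ℂ),
    (∀ n : ℕ, x ≠ -(n : ℂ)) → (∀ n : ℕ, y ≠ -(n : ℂ)) →
    (∀ j : ℕ, j ≤ p → ∀ n : ℕ, x + y + (j : ℂ) ≠ -(n : ℂ)) →
    ∑ j ∈ range (p + 1),
        (-1 : ℂ) ^ j * (p.choose j : ℂ) * Gamma (x + j) / Gamma (x + y + j) =
      Gamma x * Gamma (y + p) / (Gamma (x + y + p) * Gamma y) := by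
  intro p
  induction p with
  | zero =>
    intro x y hx hy hxy
    have hΓy : Gamma y ≠ 0 := Complex.Gamma_ne_zero hy
    have hΓxy : Gamma (x + y) ≠ 0 :=
      Complex.Gamma_ne_zero (fun n => by simpa using hxy 0 le_rfl n)
    simp only [zero_add, Finset.sum_range_one, pow_zero, Nat.choose_self, Nat.cast_one,
      Nat.cast_zero, add_zero, one_mul]
    field_simp
  | succ p ih =>
    intro x y hx hy hxy
    have hx0 : x ≠ 0 := by simpa using hx 0
    have hΓy : Gamma y ≠ 0 := Complex.Gamma_ne_zero hy
    have hxyp : x + y + (p : ℂ) ≠ 0 := by simpa using hxy p (Nat.le_succ p) 0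
    have hyp : y + (p : ℂ) ≠ 0 := by
      intro h
      exact hy p (by linear_combination h)
    have hΓxyp : Gamma (x + y + p) ≠ 0 :=
      Complex.Gamma_ne_zero (hxy p (Nat.le_succ p))
    have hx' : ∀ n : ℕ, x + 1 ≠ -(n : ℂ) := by
      intro n h
      exact hx (n + 1) (by push_cast; linear_combination h)
    have hxy' : ∀ j : ℕ, j ≤ p → ∀ n : ℕ, x + 1 + y + (j : ℂ) ≠ -(n : ℂ) := by
      intro j hj n h
      exact hxy (j + 1) (Nat.succ_le_succ hj) n (by push_cast; linear_combination h)
    have IH1 := ih x y hx hy (fun j hj n => hxy j (hj.trans (Nat.le_succ p)) n)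
    have IH2 := ih (x + 1) y hx' hy hxy'
    rw [gsum_pascal, IH1, IH2]
    have g1 : Gamma (x + 1) = x * Gamma x := Complex.Gamma_add_one x hx0
    have g2 : Gamma (x + y + (p + 1 : ℕ)) = (x + y + p) * Gamma (x + y + p) := by
      have : x + y + ((p : ℂ) + 1) = (x + y + p) + 1 := by ring
      push_cast
      rw [this, Complex.Gamma_add_one _ hxyp]
    have g3 : Gamma (y + (p + 1 : ℕ)) = (y + p) * Gamma (y + p) := by
      have : y + ((p : ℂ) + 1) = (y + p) + 1 := by ring
      push_cast
      rw [this, Complex.Gamma_add_one _ hyp]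
    have h1 : x + 1 + y + (p : ℂ) = x + y + ((p : ℂ) + 1) := by ring
    rw [h1]
    push_cast at g2 g3 ⊢
    rw [g2, g3, g1]
    field_simp
    ring

/-- `Σ_{j=0}^{p} (−1)^j C(p,j) Γ(x+j)/Γ(x+y+j) = Γ(x)Γ(y+p)/(Γ(x+y+p)Γ(y))`. -/
theorem alternating_binomial_Gamma_sum (p : ℕ) (x y : ℂ)
    (hx : ∀ n : ℕ, x ≠ -(n : ℂ))
    (hy : ∀ n : ℕ, y ≠ -(n : ℂ))
    (hxy : ∀ j : ℕ, j ≤ p → ∀ n : ℕ, x + y + (j : ℂ) ≠ -(n : ℂ)) :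
    ∑ j ∈ Finset.range (p + 1),
        (-1 : ℂ) ^ j * (p.choose j : ℂ) * Complex.Gamma (x + j) / Complex.Gamma (x + y + j) =
      Complex.Gamma x * Complex.Gamma (y + p) /
        (Complex.Gamma (x + y + p) * Complex.Gamma y) := by
  exact gsum_main p x y hx hy hxy
end
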